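/- arXiv:1908.02801 — 2 statements merged into one kernel-verified Lean document; each statement's English description precedes it below -/
import Mathlib

section
/- The set B₂ of nonzero vectors v ∈ ℂ² such that G(v) is biangular is path-connected (in the subspace topology inherited from ℂ²). -/
open scoped ComplexConjugate

/-- The translation operator `T` on `ℂ^d = (ZMod d → ℂ)`: `(T v) j = v (j - 1)`. -/
noncomputable def gT (d : ℕ) : (ZMod d → ℂ) ≃ₗ[ℂ] (ZMod d → ℂ) :=
  LinearEquiv.funCongrLeft ℂ ℂ (Equiv.subRight (1 : ZMod d))

/-- The modulation operator `M` on `ℂ^d`: `(M v) j = ω ^ j * v j` with `ω = exp (2 π i / d)`. -/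
noncomputable def gM (d : ℕ) : (ZMod d → ℂ) ≃ₗ[ℂ] (ZMod d → ℂ) :=
  LinearEquiv.piCongrRight fun j =>
    LinearEquiv.smulOfNeZero ℂ ℂ (Complex.exp (2 * Real.pi * Complex.I / d) ^ j.val)
      (pow_ne_zero _ (Complex.exp_ne_zero _))

/-- The standard inner product on `ℂ^d`, conjugate-linear in the first argument. -/
noncomputable def inn {d : ℕ} [NeZero d] (u w : ZMod d → ℂ) : ℂ :=
  ∑ j : ZMod d, conj (u j) * w j

/-- The Gabor system `G(v) = {M^ℓ T^k v}` is `(α, β)`-biangular: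
`|⟨v, T^k v⟩|² = α` for `k ∈ {1,…,d-1}` and `|⟨v, M^ℓ T^k v⟩|² = β` for
`k ∈ {0,…,d-1}`, `ℓ ∈ {1,…,d-1}`. -/
def Biangular (d : ℕ) [NeZero d] (v : ZMod d → ℂ) (α β : ℝ) : Prop :=
  (∀ k : ℕ, 1 ≤ k → k ≤ d - 1 → ‖inn v ((gT d ^ k) v)‖ ^ 2 = α) ∧
  (∀ k ℓ : ℕ, k ≤ d - 1 → 1 ≤ ℓ → ℓ ≤ d - 1 →
    ‖inn v ((gM d ^ ℓ) ((gT d ^ k) v))‖ ^ 2 = β)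

/-- `B_d`: the set of nonzero `v ∈ ℂ^d` whose Gabor system is biangular. -/
def Bset (d : ℕ) [NeZero d] : Set (ZMod d → ℂ) :=
  {v | v ≠ 0 ∧ ∃ α β : ℝ, Biangular d v α β}

/-! Write `v = (a, b)` in the coordinates `x = a + b`, `y = a - b`. For `d = 2` the only
non-trivial biangularity condition is `|⟨v, M v⟩| = |⟨v, M T v⟩|`, and `⟨v, M v⟩`, `⟨v, M T v⟩ / i`
are the real and imaginary parts of `conj y * x`. So `B₂` corresponds to the pairs `(x, y) ≠ 0`
with `conj y * x` on the two diagonals `|re| = |im|`. This set `K` is invariant under real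
scaling, hence the pairs with `x ≠ 0` are the image of `(ℂ ∖ 0) × K` under
`(x, s) ↦ (x, conj s * x)` and those with `y ≠ 0` the image of `K × (ℂ ∖ 0)` under
`(s, y) ↦ (s * y, y)`. Both are path-connected, and they meet at `(1 + i, 1)`. -/

open Complex Set

def IsRealCone (K : Set ℂ) : Prop :=
  ∀ t : ℝ, ∀ w ∈ K, (t : ℂ) * w ∈ K

def pairsConjMulMem (K : Set ℂ) : Set (ℂ × ℂ) :=
  {z | z ≠ 0 ∧ conj z.2 * z.1 ∈ K}

namespace IsRealCone

variable {K : Set ℂ}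

theorem mul_mem_iff (hK : IsRealCone K) {t : ℝ} (ht : t ≠ 0) {w : ℂ} :
    (t : ℂ) * w ∈ K ↔ w ∈ K := by
  refine ⟨fun h => ?_, hK t w⟩
  simpa [← mul_assoc, ht] using hK t⁻¹ _ h

theorem starConvex (hK : IsRealCone K) : StarConvex ℝ 0 K := by
  intro w hw a b _ _ _
  simpa [real_smul] using hK b w hw

theorem setOf_fst_ne_zero_eq_image (hK : IsRealCone K) :
    {z ∈ pairsConjMulMem K | z.1 ≠ 0} =
      (fun p : ℂ × ℂ => (p.1, conj p.2 * p.1)) '' ({0}ᶜ ×ˢ K) := by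
  ext ⟨x, y⟩
  simp only [pairsConjMulMem, mem_ofPred_eq, mem_image, mem_prod, mem_compl_singleton_iff,
    Prod.mk.injEq, Prod.exists]
  constructor
  · rintro ⟨⟨-, hmem⟩, hx⟩
    refine ⟨x, conj (y / x), ⟨hx, ?_⟩, rfl, by simp [hx]⟩
    have : conj (y / x) = ((normSq x)⁻¹ : ℝ) * (conj y * x) := by
      rw [map_div₀, div_eq_mul_inv, inv_def, normSq_conj, conj_conj]
      ring
    rwa [this, hK.mul_mem_iff (by simpa using hx)]
  · rintro ⟨x, s, ⟨hx, hs⟩, rfl, rfl⟩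
    refine ⟨⟨by simp [hx], ?_⟩, hx⟩
    have : conj (conj s * x) * x = (normSq x : ℝ) * s := by
      rw [normSq_eq_conj_mul_self, map_mul, conj_conj]
      ring
    rwa [this, hK.mul_mem_iff (by simpa using hx)]

theorem setOf_snd_ne_zero_eq_image (hK : IsRealCone K) :
    {z ∈ pairsConjMulMem K | z.2 ≠ 0} =
      (fun p : ℂ × ℂ => (p.1 * p.2, p.2)) '' (K ×ˢ {0}ᶜ) := by
  ext ⟨x, y⟩
  simp only [pairsConjMulMem, mem_ofPred_eq, mem_image, mem_prod, mem_compl_singleton_iff,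
    Prod.mk.injEq, Prod.exists]
  constructor
  · rintro ⟨⟨-, hmem⟩, hy⟩
    refine ⟨x / y, y, ⟨?_, hy⟩, div_mul_cancel₀ x hy, rfl⟩
    have : x / y = ((normSq y)⁻¹ : ℝ) * (conj y * x) := by
      rw [div_eq_mul_inv, inv_def]
      ring
    rwa [this, hK.mul_mem_iff (by simpa using hy)]
  · rintro ⟨s, y, ⟨hs, hy⟩, rfl, rfl⟩
    refine ⟨⟨by simp [hy], ?_⟩, hy⟩
    have : conj y * (s * y) = (normSq y : ℝ) * s := by
      rw [normSq_eq_conj_mul_self]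
      ring
    rwa [this, hK.mul_mem_iff (by simpa using hy)]

theorem isPathConnected_pairsConjMulMem (hK : IsRealCone K) {w₀ : ℂ} (hw₀ : w₀ ∈ K)
    (hw₀_ne : w₀ ≠ 0) : IsPathConnected (pairsConjMulMem K) := by
  have hKconn : IsPathConnected K := hK.starConvex.isPathConnected (by simpa using hK 0 w₀ hw₀)
  have hunits : IsPathConnected ({0}ᶜ : Set ℂ) :=
    isPathConnected_compl_singleton_of_one_lt_rank (by simp) 0
  have hA : IsPathConnected {z ∈ pairsConjMulMem K | z.1 ≠ 0} := by
    rw [hK.setOf_fst_ne_zero_eq_image]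
    exact (hunits.prod hKconn).image (by fun_prop)
  have hB : IsPathConnected {z ∈ pairsConjMulMem K | z.2 ≠ 0} := by
    rw [hK.setOf_snd_ne_zero_eq_image]
    exact (hKconn.prod hunits).image (by fun_prop)
  have hAB : pairsConjMulMem K =
      {z ∈ pairsConjMulMem K | z.1 ≠ 0} ∪ {z ∈ pairsConjMulMem K | z.2 ≠ 0} := by
    ext z
    simp only [pairsConjMulMem, mem_union, mem_ofPred_eq, ← and_or_left, ne_eq,
      ← not_and_or, Prod.ext_iff, Prod.fst_zero, Prod.snd_zero]
    tauto
  rw [hAB]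
  exact hA.union hB ⟨(w₀, 1), ⟨⟨by simp [hw₀_ne], by simpa using hw₀⟩, hw₀_ne⟩,
    ⟨by simp, by simpa using hw₀⟩, one_ne_zero⟩

end IsRealCone

theorem isRealCone_abs_re_eq_abs_im : IsRealCone {w : ℂ | |w.re| = |w.im|} := by
  intro t w hw
  simp_all [abs_mul]

section TwoDim

variable (v : ZMod 2 → ℂ)

theorem inn_two (u w : ZMod 2 → ℂ) : inn u w = conj (u 0) * w 0 + conj (u 1) * w 1 :=
  Fin.sum_univ_two _

@[simp] theorem gT_two_apply_zero : gT 2 v 0 = v 1 := rfl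

@[simp] theorem gT_two_apply_one : gT 2 v 1 = v 0 := rfl

@[simp] theorem gM_two_apply_zero : gM 2 v 0 = v 0 := by
  simp [gM]

@[simp] theorem gM_two_apply_one : gM 2 v 1 = -v 1 := by
  have hω : cexp (2 * Real.pi * I / 2) = -1 := by
    rw [← exp_pi_mul_I]; congr 1; ring
  simp [gM, hω, show (1 : ZMod 2).val = 1 from rfl]

theorem inn_self_gM_two :
    inn v (gM 2 v) = ((conj (v 0 - v 1) * (v 0 + v 1)).re : ℂ) := by
  apply Complex.ext <;> simp [inn_two] <;> ring

theorem inn_self_gM_gT_two :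
    inn v (gM 2 (gT 2 v)) = ((conj (v 0 - v 1) * (v 0 + v 1)).im : ℂ) * I := by
  apply Complex.ext <;> simp [inn_two] <;> ring

theorem biangular_two_iff {α β : ℝ} :
    Biangular 2 v α β ↔ ‖inn v (gT 2 v)‖ ^ 2 = α ∧ ‖inn v (gM 2 v)‖ ^ 2 = β ∧
      ‖inn v (gM 2 (gT 2 v))‖ ^ 2 = β := by
  constructor
  · rintro ⟨hα, hβ⟩
    exact ⟨hα 1 le_rfl le_rfl, hβ 0 1 zero_le_one le_rfl le_rfl, hβ 1 1 le_rfl le_rfl le_rfl⟩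
  · rintro ⟨hα, hβ₀, hβ₁⟩
    refine ⟨fun k hk hk' => ?_, fun k ℓ hk hℓ hℓ' => ?_⟩
    · obtain rfl : k = 1 := by omega
      simpa using hα
    · obtain rfl : ℓ = 1 := by omega
      obtain rfl | rfl : k = 0 ∨ k = 1 := by omega
      · simpa using hβ₀
      · simpa using hβ₁

theorem exists_biangular_two_iff :
    (∃ α β : ℝ, Biangular 2 v α β) ↔
      |(conj (v 0 - v 1) * (v 0 + v 1)).re| = |(conj (v 0 - v 1) * (v 0 + v 1)).im| := by
  have key : (∃ α β : ℝ, Biangular 2 v α β) ↔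
      ‖inn v (gM 2 v)‖ ^ 2 = ‖inn v (gM 2 (gT 2 v))‖ ^ 2 := by
    simp [biangular_two_iff, eq_comm]
  simp only [key, inn_self_gM_two, inn_self_gM_gT_two, norm_mul, norm_I, mul_one, norm_real,
    Real.norm_eq_abs, sq_abs, sq_eq_sq_iff_abs_eq_abs]

end TwoDim

def toPair (v : ZMod 2 → ℂ) : ℂ × ℂ := (v 0 + v 1, v 0 - v 1)

noncomputable def ofPair (z : ℂ × ℂ) : ZMod 2 → ℂ :=
  fun j => if j = 0 then (z.1 + z.2) / 2 else (z.1 - z.2) / 2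

theorem toPair_ofPair : Function.LeftInverse toPair ofPair := by
  rintro ⟨x, y⟩
  simp [toPair, ofPair, show (1 : ZMod 2) ≠ 0 by decide]
  constructor <;> ring

theorem ofPair_toPair : Function.RightInverse toPair ofPair := by
  intro v
  funext j
  obtain rfl | rfl : j = 0 ∨ j = 1 := by revert j; decide
  · simp [toPair, ofPair]
  · simp [toPair, ofPair, show (1 : ZMod 2) ≠ 0 by decide]

theorem continuous_ofPair : Continuous ofPair :=
  continuous_pi fun j => by unfold ofPair; split_ifs <;> fun_prop

theorem mem_bset_two_iff (v : ZMod 2 → ℂ) :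
    v ∈ Bset 2 ↔ toPair v ∈ pairsConjMulMem {w | |w.re| = |w.im|} := by
  have hzero : toPair v = 0 ↔ v = 0 := ofPair_toPair.injective.eq_iff' (by simp [toPair])
  simp only [Bset, pairsConjMulMem, mem_ofPred_eq, exists_biangular_two_iff, ne_eq, hzero]
  rfl

/-- the set `B₂` of nonzero generators of biangular Gabor systems in `ℂ²`
is path-connected. -/
theorem bset_two_pathConnected : IsPathConnected (Bset 2) := by
  have hB : Bset 2 = ofPair '' pairsConjMulMem {w : ℂ | |w.re| = |w.im|} := by
    rw [image_eq_preimage_of_inverse toPair_ofPair ofPair_toPair]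
    exact Set.ext mem_bset_two_iff
  rw [hB]
  refine (isRealCone_abs_re_eq_abs_im.isPathConnected_pairsConjMulMem (w₀ := 1 + I) ?_ ?_).image
    continuous_ofPair
  · simp
  · simp [Complex.ext_iff]
end

section
/- Let d ≥ 2. Suppose there exist unit-norm vectors v₀, v₁ ∈ ℂ^d and real numbers α₀, α₁ such that: (i) G(v_j) is (α_j, (1-α_j)/d)-biangular for each j ∈ {0,1}; (ii) v₀ and v₁ are joined by a continuous path lying in B_d (the set of nonzero generators of biangular Gabor systems); and (iii) α₀ < 1/(d+1) < α₁. Then there exists a unit-norm vector w ∈ ℂ^d such that |⟨w, M^ℓ T^k w⟩|² = 1/(d+1) for all (k,ℓ) ∈ {0,…,d-1}² with (k,ℓ) ≠ (0,0); that is, there exists a SIC in ℂ^d. -/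
open scoped ComplexConjugate

/-!
The Gabor system of any `v` is a tight frame: Parseval for the discrete Fourier transform in the
modulation index gives `∑_{k,ℓ} |⟨v, M^ℓ T^k v⟩|² = d ‖v‖⁴`, so every `(α, β)`-biangular
generator satisfies `α + d β = ‖v‖⁴`. The normalized translation angle `|⟨v, T v⟩|² / ‖v‖⁴` is
continuous on nonzero vectors, hence by the intermediate value theorem it equals `1 / (d + 1)`
somewhere on the path; there `α = β = ‖v‖⁴ / (d + 1)`, and `v / ‖v‖` generates a SIC.
-/

open Finset

theorem AddChar.sum_norm_sum_mul_sq {R : Type*} [CommRing R] [Fintype R] {ψ : AddChar R ℂ}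
    (hψ : ψ.IsPrimitive) (a : R → ℂ) :
    ∑ ℓ, ‖∑ j, ψ (j * ℓ) * a j‖ ^ 2 = Fintype.card R * ∑ j, ‖a j‖ ^ 2 := by
  classical
  apply Complex.ofReal_injective
  push_cast
  simp_rw [← Complex.mul_conj']
  calc ∑ ℓ, (∑ j, ψ (j * ℓ) * a j) * conj (∑ j, ψ (j * ℓ) * a j)
      = ∑ ℓ, ∑ j, ∑ j', a j * conj (a j') * ψ (ℓ * (j - j')) := by
        refine sum_congr rfl fun ℓ _ => ?_
        simp_rw [map_sum, sum_mul_sum, map_mul, ← AddChar.map_neg_eq_conj]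
        refine sum_congr rfl fun j _ => sum_congr rfl fun j' _ => ?_
        rw [mul_sub, sub_eq_add_neg, AddChar.map_add_eq_mul, mul_comm ℓ, mul_comm ℓ]
        ring
    _ = ∑ j, ∑ j', a j * conj (a j') * ∑ ℓ, ψ (ℓ * (j - j')) := by
        simp_rw [mul_sum]
        rw [sum_comm]
        exact sum_congr rfl fun j _ => sum_comm
    _ = ∑ j, a j * conj (a j) * Fintype.card R := by
        simp only [AddChar.sum_mulShift _ hψ, sub_eq_zero, Nat.cast_ite, Nat.cast_zero, mul_ite,
          mul_zero, sum_ite_eq, mem_univ, if_true]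
    _ = Fintype.card R * ∑ j, a j * conj (a j) := by
        rw [mul_sum]
        exact sum_congr rfl fun j _ => mul_comm _ _

theorem sum_norm_sq_pos {ι E : Type*} [Fintype ι] [NormedAddCommGroup E] {v : ι → E}
    (hv : v ≠ 0) : 0 < ∑ j, ‖v j‖ ^ 2 := by
  obtain ⟨j, hj⟩ := Function.ne_iff.mp hv
  exact sum_pos' (fun _ _ => by positivity) ⟨j, mem_univ j, by positivity⟩

section Gabor

variable {d : ℕ}

theorem gT_pow_apply (k : ℕ) (v : ZMod d → ℂ) (j : ZMod d) :
    (gT d ^ k) v j = v (j - k) := by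
  induction k generalizing v with
  | zero => simp
  | succ k ih =>
    rw [pow_succ, LinearEquiv.mul_apply, ih]
    change v (j - k - 1) = _
    push_cast
    ring_nf

variable [NeZero d]

theorem gM_apply (v : ZMod d → ℂ) (j : ZMod d) : gM d v j = ZMod.stdAddChar j * v j := by
  change Complex.exp (2 * Real.pi * Complex.I / d) ^ j.val * v j = _
  rw [ZMod.stdAddChar_apply, ZMod.toCircle_apply, ← Complex.exp_nat_mul]
  congr 2
  ring

theorem gM_pow_apply (ℓ : ℕ) (v : ZMod d → ℂ) (j : ZMod d) :
    (gM d ^ ℓ) v j = ZMod.stdAddChar (j * (ℓ : ZMod d)) * v j := by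
  induction ℓ generalizing v with
  | zero => simp
  | succ ℓ ih =>
    rw [pow_succ, LinearEquiv.mul_apply, ih, gM_apply, ← mul_assoc, ← AddChar.map_add_eq_mul]
    push_cast
    ring_nf

theorem sum_range_natCast_eq_sum {M : Type*} [AddCommMonoid M] (f : ZMod d → M) :
    ∑ k ∈ range d, f k = ∑ i, f i := by
  refine sum_nbij' (fun k => (k : ZMod d)) (fun i => i.val) ?_ ?_ ?_ ?_ ?_ <;>
    simp +contextual [Nat.mod_eq_of_lt, ZMod.val_lt, ZMod.natCast_val]

theorem inn_gM_pow_gT_pow (v : ZMod d → ℂ) (k ℓ : ℕ) :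
    inn v ((gM d ^ ℓ) ((gT d ^ k) v)) =
      ∑ j, ZMod.stdAddChar (j * (ℓ : ZMod d)) * (conj (v j) * v (j - k)) := by
  refine sum_congr rfl fun j _ => ?_
  rw [gM_pow_apply, gT_pow_apply]
  ring

theorem sum_norm_inn_gM_pow_gT_pow_sq (v : ZMod d → ℂ) :
    ∑ k ∈ range d, ∑ ℓ ∈ range d, ‖inn v ((gM d ^ ℓ) ((gT d ^ k) v))‖ ^ 2 =
      d * (∑ j, ‖v j‖ ^ 2) ^ 2 := by
  have parseval (k : ZMod d) :
      ∑ ℓ ∈ range d, ‖∑ j, ZMod.stdAddChar (j * (ℓ : ZMod d)) * (conj (v j) * v (j - k))‖ ^ 2 =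
        d * ∑ j, ‖v j‖ ^ 2 * ‖v (j - k)‖ ^ 2 := by
    rw [sum_range_natCast_eq_sum fun ℓ : ZMod d =>
        ‖∑ j, ZMod.stdAddChar (j * ℓ) * (conj (v j) * v (j - k))‖ ^ 2,
      AddChar.sum_norm_sum_mul_sq (ZMod.isPrimitive_stdAddChar d), ZMod.card]
    simp only [norm_mul, Complex.norm_conj, mul_pow]
  simp_rw [inn_gM_pow_gT_pow]
  rw [sum_range_natCast_eq_sum fun k : ZMod d =>
    ∑ ℓ ∈ range d, ‖∑ j, ZMod.stdAddChar (j * (ℓ : ZMod d)) * (conj (v j) * v (j - k))‖ ^ 2]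
  simp_rw [parseval, ← mul_sum, sq (∑ j, ‖v j‖ ^ 2), sum_mul]
  rw [sum_comm]
  simp_rw [← mul_sum]
  congr 1
  refine sum_congr rfl fun j _ => ?_
  congr 1
  exact Equiv.sum_comp (Equiv.subLeft j) fun i => ‖v i‖ ^ 2

theorem inn_self (v : ZMod d → ℂ) : inn v v = ((∑ j, ‖v j‖ ^ 2 : ℝ) : ℂ) := by
  push_cast
  exact sum_congr rfl fun j _ => Complex.conj_mul' (v j)

theorem inn_smul_smul (c : ℂ) (u w : ZMod d → ℂ) : inn (c • u) (c • w) = conj c * c * inn u w := by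
  simp only [inn, Pi.smul_apply, smul_eq_mul, map_mul, mul_sum]
  exact sum_congr rfl fun j _ => by ring

theorem Biangular.smul {v : ZMod d → ℂ} {α β : ℝ} (hb : Biangular d v α β) (c : ℂ) :
    Biangular d (c • v) (‖c‖ ^ 4 * α) (‖c‖ ^ 4 * β) := by
  have hscale (k ℓ : ℕ) : ‖inn (c • v) ((gM d ^ ℓ) ((gT d ^ k) (c • v)))‖ ^ 2 =
      ‖c‖ ^ 4 * ‖inn v ((gM d ^ ℓ) ((gT d ^ k) v))‖ ^ 2 := by
    rw [_root_.map_smul, _root_.map_smul, inn_smul_smul, Complex.conj_mul', norm_mul, norm_pow,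
      Complex.norm_real, Real.norm_of_nonneg (norm_nonneg c)]
    ring
  refine ⟨fun k hk hk' => ?_, fun k ℓ hk hℓ hℓ' => ?_⟩
  · have h := hscale k 0
    rw [pow_zero, LinearEquiv.coe_one, id, id] at h
    rw [h, hb.1 k hk hk']
  · rw [hscale, hb.2 k ℓ hk hℓ hℓ']

theorem Biangular.add_mul_eq_sq (hd : 2 ≤ d) {v : ZMod d → ℂ} {α β : ℝ}
    (hb : Biangular d v α β) : α + d * β = (∑ j, ‖v j‖ ^ 2) ^ 2 := by
  obtain ⟨n, rfl⟩ : ∃ n, d = n + 1 := Nat.exists_eq_add_of_le' (NeZero.pos d)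
  have hrow (k : ℕ) (hk : k ≤ n) :
      ∑ ℓ ∈ range (n + 1), ‖inn v ((gM (n + 1) ^ ℓ) ((gT (n + 1) ^ k) v))‖ ^ 2 =
        ‖inn v ((gT (n + 1) ^ k) v)‖ ^ 2 + n * β := by
    rw [sum_range_succ', sum_congr rfl fun ℓ hℓ => hb.2 k (ℓ + 1) (by omega) (by omega)
      (by have := mem_range.mp hℓ; omega), sum_const, card_range, nsmul_eq_mul, pow_zero, add_comm]
    rfl
  have hcol (k : ℕ) (hk : 1 ≤ k) (hk' : k ≤ n) : ‖inn v ((gT (n + 1) ^ k) v)‖ ^ 2 = α :=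
    hb.1 k hk (by omega)
  have hframe := sum_norm_inn_gM_pow_gT_pow_sq v
  rw [sum_congr rfl fun k hk => hrow k (by have := mem_range.mp hk; omega), sum_range_succ',
    sum_congr rfl fun k hk => by rw [hcol (k + 1) (by omega) (by have := mem_range.mp hk; omega)],
    pow_zero, LinearEquiv.coe_one, id, inn_self, Complex.norm_real, Real.norm_of_nonneg
      (by positivity)] at hframe
  simp only [sum_const, card_range, nsmul_eq_mul] at hframe
  have hn : (n : ℝ) ≠ 0 := by norm_cast; omega
  apply mul_left_cancel₀ hn
  push_cast at hframe ⊢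
  linear_combination hframe

theorem Biangular.norm_inn_sq_eq {w : ZMod d → ℂ} {a : ℝ} (hb : Biangular d w a a) (k ℓ : ℕ)
    (hk : k ≤ d - 1) (hℓ : ℓ ≤ d - 1) (hkℓ : ¬(k = 0 ∧ ℓ = 0)) :
    ‖inn w ((gM d ^ ℓ) ((gT d ^ k) w))‖ ^ 2 = a := by
  rcases Nat.eq_zero_or_pos ℓ with rfl | hℓ0
  · rw [pow_zero, LinearEquiv.coe_one, id]
    exact hb.1 k (by omega) hk
  · exact hb.2 k ℓ hk hℓ0 hℓ

theorem Biangular.exists_normalized {v : ZMod d → ℂ} {α β : ℝ} (hv : v ≠ 0)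
    (hb : Biangular d v α β) :
    ∃ w : ZMod d → ℂ, ∑ j, ‖w j‖ ^ 2 = 1 ∧
      Biangular d w (α / (∑ j, ‖v j‖ ^ 2) ^ 2) (β / (∑ j, ‖v j‖ ^ 2) ^ 2) := by
  set S := ∑ j, ‖v j‖ ^ 2
  have hS : 0 < S := sum_norm_sq_pos hv
  set c : ℂ := (((√S)⁻¹ : ℝ) : ℂ)
  have hc2 : ‖c‖ ^ 2 = S⁻¹ := by
    rw [Complex.norm_real, norm_inv, Real.norm_of_nonneg (Real.sqrt_nonneg S), inv_pow,
      Real.sq_sqrt hS.le]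
  have hc4 : ‖c‖ ^ 4 = (S ^ 2)⁻¹ := by rw [show 4 = 2 * 2 from rfl, pow_mul, hc2, inv_pow]
  refine ⟨c • v, ?_, ?_⟩
  · simp only [Pi.smul_apply, smul_eq_mul, norm_mul, mul_pow, ← mul_sum, hc2]
    exact inv_mul_cancel₀ hS.ne'
  · simpa only [hc4, inv_mul_eq_div] using hb.smul c

theorem Biangular.eq_one_div_of_sum_norm_sq_eq_one (hd : 2 ≤ d) {w : ZMod d → ℂ} {β : ℝ}
    (hw : ∑ j, ‖w j‖ ^ 2 = 1) (hb : Biangular d w (1 / (d + 1)) β) : β = 1 / (d + 1) := by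
  have hframe := hb.add_mul_eq_sq hd
  rw [hw, one_pow] at hframe
  have hd0 : (d : ℝ) ≠ 0 := NeZero.ne _
  field_simp at hframe ⊢
  apply mul_left_cancel₀ hd0
  linear_combination hframe

noncomputable def translationAngle (v : ZMod d → ℂ) : ℝ :=
  ‖inn v (gT d v)‖ ^ 2 / (∑ j, ‖v j‖ ^ 2) ^ 2

theorem Biangular.translationAngle_eq (hd : 2 ≤ d) {v : ZMod d → ℂ} {α β : ℝ}
    (hb : Biangular d v α β) : translationAngle v = α / (∑ j, ‖v j‖ ^ 2) ^ 2 := by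
  rw [translationAngle, ← hb.1 1 le_rfl (by omega), pow_one]

theorem continuousOn_translationAngle :
    ContinuousOn (translationAngle (d := d)) {v | v ≠ 0} := by
  have hT : Continuous (gT d) := (gT d).toLinearMap.continuous_of_finiteDimensional
  refine ContinuousOn.div (Continuous.continuousOn ?_) (Continuous.continuousOn (by fun_prop))
    fun v hv => pow_ne_zero 2 (sum_norm_sq_pos hv).ne'
  unfold inn
  fun_prop

end Gabor

/-- if two unit-norm biangular generators with angles on opposite sides of
`1 / (d + 1)` are joined by a path inside `B_d`, then a SIC exists in `ℂ^d`. -/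
theorem sic_of_path_between_biangular (d : ℕ) [NeZero d] (hd : 2 ≤ d)
    (v₀ v₁ : ZMod d → ℂ) (α₀ α₁ : ℝ)
    (hn₀ : ∑ j, ‖v₀ j‖ ^ 2 = 1) (hn₁ : ∑ j, ‖v₁ j‖ ^ 2 = 1)
    (hb₀ : Biangular d v₀ α₀ ((1 - α₀) / d)) (hb₁ : Biangular d v₁ α₁ ((1 - α₁) / d))
    (hpath : JoinedIn (Bset d) v₀ v₁)
    (hα₀ : α₀ < 1 / (d + 1)) (hα₁ : 1 / (d + 1) < α₁) :
    ∃ w : ZMod d → ℂ, (∑ j, ‖w j‖ ^ 2 = 1) ∧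
      ∀ k ℓ : ℕ, k ≤ d - 1 → ℓ ≤ d - 1 → ¬(k = 0 ∧ ℓ = 0) →
        ‖inn w ((gM d ^ ℓ) ((gT d ^ k) w))‖ ^ 2 = 1 / (d + 1) := by
  obtain ⟨γ, hγ⟩ := hpath
  have hcont : Continuous fun t => translationAngle (γ t) :=
    continuousOn_translationAngle.comp_continuous γ.continuous fun t => (hγ t).1
  have h₀ : translationAngle (γ 0) = α₀ := by
    rw [γ.source, hb₀.translationAngle_eq hd, hn₀, one_pow, div_one]
  have h₁ : translationAngle (γ 1) = α₁ := by
    rw [γ.target, hb₁.translationAngle_eq hd, hn₁, one_pow, div_one]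
  obtain ⟨t, ht⟩ : ∃ t, translationAngle (γ t) = 1 / (d + 1) :=
    intermediate_value_univ 0 1 hcont (by rw [h₀, h₁]; exact ⟨hα₀.le, hα₁.le⟩)
  obtain ⟨hv, α, β, hb⟩ := hγ t
  obtain ⟨w, hw, hbw⟩ := hb.exists_normalized hv
  rw [← hb.translationAngle_eq hd, ht] at hbw
  rw [hbw.eq_one_div_of_sum_norm_sq_eq_one hd hw] at hbw
  exact ⟨w, hw, hbw.norm_inn_sq_eq⟩
end
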